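/- Let (N,f) be a polymatroid, i ∈ N, and t a real number with max_{j ∈ N∖{i}} [f({i,j}) − f({j})] ≤ t ≤ f({i}). Let (N,g) be a modular polymatroid with g({i}) = t and f({j}) ≤ g({j}) for all j ∈ N∖{i}. Then the convolution f∗g agrees with f on every subset of N except that f∗g({i}) = t. -/

import Mathlib

open Finset

variable {α : Type*} [DecidableEq α]

/-- A polymatroid rank function on the ground set `N`. -/
def IsPolymatroid (N : Finset α) (f : Finset α → ℝ) : Prop :=
  f ∅ = 0 ∧
  (∀ I J : Finset α, I ⊆ J → J ⊆ N → f I ≤ f J) ∧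
  (∀ I J : Finset α, I ⊆ N → J ⊆ N → f (I ∪ J) + f (I ∩ J) ≤ f I + f J)

/-- A modular set function on `N`. -/
def IsModular (N : Finset α) (g : Finset α → ℝ) : Prop :=
  ∀ I : Finset α, I ⊆ N → g I = ∑ i ∈ I, g {i}

/-- A tight set function on `N`. -/
def IsTight (N : Finset α) (g : Finset α → ℝ) : Prop :=
  ∀ i ∈ N, g N = g (N \ {i})

/-- The convolution `f ∗ g` of two set functions. -/
noncomputable def conv (f g : Finset α → ℝ) (I : Finset α) : ℝ :=
  I.powerset.inf' (Finset.powerset_nonempty I) (fun J => f J + g (I \ J))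

/-!
For `J ⊆ I` the term `f J + g (I \ J)` of the convolution is at least `f I`: add the elements of
`I \ J` to `J` one at a time. By submodularity an element `j ≠ i` raises `f` by at most
`f {j} ≤ g {j}`; the element `i` is added last, when the set already contains some `k ≠ i`
(this is where `I ≠ {i}` enters), so it raises `f` by at most `f {i, k} - f {k} ≤ t = g {i}`.
Taking `J = I` gives equality. For `I = {i}` the two terms are `g {i} = t` and `f {i} ≥ t`.
-/

theorem conv_le (f g : Finset α → ℝ) {I J : Finset α} (hJI : J ⊆ I) :
    conv f g I ≤ f J + g (I \ J) :=
  inf'_le _ (mem_powerset.mpr hJI)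

theorem le_conv_iff {f g : Finset α → ℝ} {I : Finset α} {c : ℝ} :
    c ≤ conv f g I ↔ ∀ J ⊆ I, c ≤ f J + g (I \ J) := by
  simp [conv, le_inf'_iff]

theorem conv_le_self (f : Finset α → ℝ) {g : Finset α → ℝ} (hg : g ∅ = 0) (I : Finset α) :
    conv f g I ≤ f I := by
  simpa [hg] using conv_le f g (subset_refl I)

namespace IsPolymatroid

variable {N A B C : Finset α} {f : Finset α → ℝ}

theorem union_sub_le_union_sub (hf : IsPolymatroid N f) (hBA : B ⊆ A) (hA : A ⊆ N)
    (hC : C ⊆ N) : f (A ∪ C) - f A ≤ f (B ∪ C) - f B := by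
  have hsub := hf.2.2 A (B ∪ C) hA (union_subset (hBA.trans hA) hC)
  have hunion : A ∪ (B ∪ C) = A ∪ C := by rw [← union_assoc, union_eq_left.mpr hBA]
  have hinter : f B ≤ f (A ∩ (B ∪ C)) :=
    hf.2.1 _ _ (subset_inter hBA subset_union_left) (inter_subset_left.trans hA)
  rw [hunion] at hsub
  linarith

theorem union_le_add (hf : IsPolymatroid N f) (hA : A ⊆ N) (hC : C ⊆ N) :
    f (A ∪ C) ≤ f A + f C := by
  simpa [hf.1, add_comm] using hf.union_sub_le_union_sub (empty_subset A) hA hC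

theorem union_le_add_sum (hf : IsPolymatroid N f) (hA : A ⊆ N) (hB : B ⊆ N) :
    f (A ∪ B) ≤ f A + ∑ j ∈ B, f {j} := by
  induction B using Finset.induction_on with
  | empty => simp
  | insert j B hj ih =>
    have hjN : {j} ⊆ N := singleton_subset_iff.mpr (hB (mem_insert_self j B))
    have hBN : B ⊆ N := (subset_insert j B).trans hB
    have hunion : A ∪ insert j B = A ∪ B ∪ {j} := by
      rw [insert_eq, union_comm {j}, union_assoc]
    rw [hunion, sum_insert hj]
    linarith [hf.union_le_add (union_subset hA hBN) hjN, ih hBN]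

end IsPolymatroid

theorem IsPolymatroid.le_add_sum_sdiff {N : Finset α} {f g : Finset α → ℝ}
    (hf : IsPolymatroid N f) {i : α} {t : ℝ}
    (ht : ∀ j ∈ N \ {i}, f {i, j} - f {j} ≤ t) (hgi : g {i} = t)
    (hdom : ∀ j ∈ N \ {i}, f {j} ≤ g {j})
    {I J : Finset α} (hIN : I ⊆ N) (hI : I ≠ {i}) (hJI : J ⊆ I) :
    f I ≤ f J + ∑ j ∈ I \ J, g {j} := by
  have hadd : ∀ D ⊆ N \ {i}, f (J ∪ D) ≤ f J + ∑ j ∈ D, g {j} := fun D hD =>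
    (hf.union_le_add_sum (hJI.trans hIN) (hD.trans sdiff_subset)).trans
      (by gcongr with j hj; exact hdom j (hD hj))
  by_cases hiIJ : i ∈ I \ J
  · obtain ⟨hiI, -⟩ := mem_sdiff.mp hiIJ
    obtain ⟨k, hkI, hki⟩ : ∃ k ∈ I, k ≠ i := by
      by_contra! h
      exact hI (eq_singleton_iff_unique_mem.mpr ⟨hiI, h⟩)
    have hk : k ∈ N \ {i} := mem_sdiff.mpr ⟨hIN hkI, by simpa using hki⟩
    have hJD : J ∪ (I \ J).erase i = I.erase i := by
      ext x
      have := @hJI x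
      grind
    have hstep : f I - f (I.erase i) ≤ t :=
      calc f I - f (I.erase i) = f (I.erase i ∪ {i}) - f (I.erase i) := by
            rw [union_comm, ← insert_eq, insert_erase hiI]
        _ ≤ f ({k} ∪ {i}) - f {k} :=
          hf.union_sub_le_union_sub (singleton_subset_iff.mpr (mem_erase.mpr ⟨hki, hkI⟩))
            ((erase_subset i I).trans hIN) (singleton_subset_iff.mpr (hIN hiI))
        _ ≤ t := by simpa [union_comm, ← insert_eq] using ht k hk
    have hrest := hadd ((I \ J).erase i) (fun x hx => by
      obtain ⟨hxi, hxIJ⟩ := mem_erase.mp hx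
      exact mem_sdiff.mpr ⟨hIN (mem_sdiff.mp hxIJ).1, by simpa using hxi⟩)
    rw [hJD] at hrest
    rw [← add_sum_erase _ _ hiIJ, hgi]
    linarith
  · have hD : I \ J ⊆ N \ {i} := fun x hx => mem_sdiff.mpr
      ⟨hIN (mem_sdiff.mp hx).1, by rintro h; exact hiIJ (mem_singleton.mp h ▸ hx)⟩
    simpa [union_sdiff_of_subset hJI] using hadd _ hD

theorem conv_cut_general (N : Finset α) (f g : Finset α → ℝ)
    (hf : IsPolymatroid N f) (hgm : IsModular N g)
    (i : α) (t : ℝ)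
    (ht1 : ∀ j ∈ N \ {i}, f {i, j} - f {j} ≤ t) (ht2 : t ≤ f {i})
    (hgi : g {i} = t) (hdom : ∀ j ∈ N \ {i}, f {j} ≤ g {j}) :
    conv f g {i} = t ∧ ∀ I ⊆ N, I ≠ {i} → conv f g I = f I := by
  have hg0 : g ∅ = 0 := by simpa using hgm ∅ (empty_subset N)
  refine ⟨le_antisymm ?_ ?_, fun I hIN hI => le_antisymm (conv_le_self f hg0 I) ?_⟩
  · simpa [hf.1, hgi] using conv_le f g (empty_subset {i})
  · refine le_conv_iff.mpr fun J hJ => ?_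
    rcases subset_singleton_iff.mp hJ with rfl | rfl
    · simp [hf.1, hgi]
    · simpa [hg0] using ht2
  · refine le_conv_iff.mpr fun J hJI => ?_
    rw [hgm _ (sdiff_subset.trans hIN)]
    exact hf.le_add_sum_sdiff ht1 hgi hdom hIN hI hJI

theorem conv_cut (N : Finset α) (f g : Finset α → ℝ)
    (hf : IsPolymatroid N f) (hg : IsPolymatroid N g) (hgm : IsModular N g)
    (i : α) (hi : i ∈ N) (t : ℝ)
    (ht1 : ∀ j ∈ N \ {i}, f {i, j} - f {j} ≤ t) (ht2 : t ≤ f {i})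
    (hgi : g {i} = t) (hdom : ∀ j ∈ N \ {i}, f {j} ≤ g {j}) :
    conv f g {i} = t ∧ ∀ I ⊆ N, I ≠ {i} → conv f g I = f I :=
  conv_cut_general N f g hf hgm i t ht1 ht2 hgi hdom
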